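/- arXiv:1211.4158 — 4 statements merged into one kernel-verified Lean document; each statement's English description precedes it below -/
import Mathlib

section
/- If (S¹⁺,S¹⁻) and (S²⁺,S²⁻) are two trivial pairs extractable from a semistandard sl(m,n)-tableau T, then the trivial pair whose shape parameters are the componentwise maxima (B_i = max(B¹_i, B²_i), B'_j = max((B¹)'_j, (B²)'_j)) is also extractable from T. Consequently, T admits a unique largest trivial extractable pair. -/
/-- Membership in the (m,n)-hook diagram given by row lengths `R` (first `m` rows, 0-indexed)
and below-line column heights `C`: box (i,j) (0-indexed). -/
def memShape (m : ℕ) (R C : ℕ → ℕ) (i j : ℕ) : Prop :=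
  (i < m ∧ j < R i) ∨ (m ≤ i ∧ i - m < C j)

instance (m : ℕ) (R C : ℕ → ℕ) (i j : ℕ) : Decidable (memShape m R C i j) := by
  unfold memShape; infer_instance

/-- `(R, C)` is a valid (m,n)-hook shape: row lengths weakly decreasing, below-line column
heights weakly decreasing with at most n-1 nonzero ones, and the hook condition: every
below-line column sits under the last of the first m rows. -/
structure IsHookShape (m n : ℕ) (R C : ℕ → ℕ) : Prop where
  rmono : ∀ ⦃i i'⦄, i ≤ i' → i' < m → R i' ≤ R i
  rzero : ∀ i, m ≤ i → R i = 0
  cmono : ∀ ⦃j j'⦄, j ≤ j' → C j' ≤ C j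
  czero : ∀ j, n - 1 ≤ j → C j = 0
  hook : ∀ j, 0 < C j → j < R (m - 1)

/-- A filling `t` of the hook shape `(R, C)` is semistandard for sl(m,n): entries in
{1,…,m+n}, rows weakly increasing and strictly increasing once the entry exceeds m,
columns weakly increasing and strictly increasing while the entry is at most m. -/
structure IsSemistandard (m n : ℕ) (R C : ℕ → ℕ) (t : ℕ → ℕ → ℕ) : Prop where
  lb : ∀ i j, memShape m R C i j → 1 ≤ t i j
  ub : ∀ i j, memShape m R C i j → t i j ≤ m + n
  rowLe : ∀ i j, memShape m R C i (j+1) → t i j ≤ t i (j+1)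
  rowLt : ∀ i j, memShape m R C i (j+1) → m < t i j → t i j < t i (j+1)
  colLe : ∀ i j, memShape m R C (i+1) j → t i j ≤ t (i+1) j
  colLt : ∀ i j, memShape m R C (i+1) j → t i j ≤ m → t i j < t (i+1) j

/-- Row lengths after pushing row i left by B i steps. -/
def pushedR (R B : ℕ → ℕ) : ℕ → ℕ := fun i => R i - B i

/-- Below-line column heights after pushing column j up by B' j steps. -/
def pushedC (C B' : ℕ → ℕ) : ℕ → ℕ := fun j => C j - B' j

/-- The filling obtained by extracting a trivial pair: rows i < m pushed left by B i,
below-line columns pushed up by B' j. -/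
def pushedT (m : ℕ) (t : ℕ → ℕ → ℕ) (B B' : ℕ → ℕ) : ℕ → ℕ → ℕ :=
  fun i j => if i < m then t i (j + B i) else t (i + B' j) j

/-- The pair of trivial tableaux with row lengths `B` (above the line) and column heights
`B'` (below the line) is extractable from the semistandard filling `t` of shape `(R,C)`:
the corresponding top-left entries are trivial (t_{i,j} = i for the first B i boxes of row
i ≤ m, and t_{i,j} = m+j for the first B' j below-line boxes of column j), and extracting
it (pushing rows left and columns up) yields a valid hook shape (this encodes condition E3)
together with a semistandard filling (conditions E1, E2, E4). -/
structure IsTrivialExtractable (m n : ℕ) (R C : ℕ → ℕ) (t : ℕ → ℕ → ℕ) (B B' : ℕ → ℕ) :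
    Prop where
  ble : ∀ i, i < m → B i ≤ R i
  bzero : ∀ i, m ≤ i → B i = 0
  bmono : ∀ ⦃i i'⦄, i ≤ i' → i' < m → B i' ≤ B i
  b'le : ∀ j, B' j ≤ C j
  b'mono : ∀ ⦃j j'⦄, j ≤ j' → B' j' ≤ B' j
  trivTop : ∀ i, i < m → ∀ j, j < B i → t i j = i + 1
  trivBot : ∀ j k, k < B' j → t (m + k) j = m + j + 1
  pushShape : IsHookShape m n (pushedR R B) (pushedC C B')
  pushSS : IsSemistandard m n (pushedR R B) (pushedC C B') (pushedT m t B B')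

/-- A semistandard filling is quasistandard when its only trivial extractable pair is the
empty one. -/
def Quasistandard (m n : ℕ) (R C : ℕ → ℕ) (t : ℕ → ℕ → ℕ) : Prop :=
  ∀ B B', IsTrivialExtractable m n R C t B B' → (∀ i, B i = 0) ∧ (∀ j, B' j = 0)

/-- `(B, B')` is the largest trivial extractable pair of the filling `t` of shape `(R,C)`. -/
def GreatestExtractable (m n : ℕ) (R C : ℕ → ℕ) (t : ℕ → ℕ → ℕ) (B B' : ℕ → ℕ) : Prop :=
  IsTrivialExtractable m n R C t B B' ∧
    ∀ B₂ B₂', IsTrivialExtractable m n R C t B₂ B₂' →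
      (∀ i, B₂ i ≤ B i) ∧ (∀ j, B₂' j ≤ B' j)

section Aux
variable {m n : ℕ} {R C : ℕ → ℕ} {t : ℕ → ℕ → ℕ}

lemma memShape_mono_row (hshape : IsHookShape m n R C) {i a b : ℕ} (hab : a ≤ b)
    (h : memShape m R C i b) : memShape m R C i a := by
  rcases h with ⟨hi, hb⟩ | ⟨hi, hb⟩
  · exact Or.inl ⟨hi, lt_of_le_of_lt hab hb⟩
  · exact Or.inr ⟨hi, lt_of_lt_of_le hb (hshape.cmono hab)⟩

lemma memShape_mono_col (hshape : IsHookShape m n R C) {a b j : ℕ} (hab : a ≤ b)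
    (h : memShape m R C b j) : memShape m R C a j := by
  rcases h with ⟨hb, hj⟩ | ⟨hb, hj⟩
  · exact Or.inl ⟨lt_of_le_of_lt hab hb, lt_of_lt_of_le hj (hshape.rmono hab hb)⟩
  · by_cases ha : a < m
    · refine Or.inl ⟨ha, ?_⟩
      have h0 : 0 < C j := Nat.lt_of_le_of_lt (Nat.zero_le _) hj
      have hk := hshape.hook j h0
      have h2 : R (m-1) ≤ R a := hshape.rmono (Nat.le_pred_of_lt ha) (by omega)
      omega
    · exact Or.inr ⟨le_of_not_gt ha, lt_of_le_of_lt (Nat.sub_le_sub_right hab m) hj⟩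

lemma row_chain (hshape : IsHookShape m n R C) (hss : IsSemistandard m n R C t)
    {i a b : ℕ} (hab : a ≤ b) : memShape m R C i b → t i a ≤ t i b := by
  induction b, hab using Nat.le_induction with
  | base => exact fun _ => le_rfl
  | succ b hab ih =>
      exact fun h => le_trans (ih (memShape_mono_row hshape (Nat.le_succ b) h)) (hss.rowLe i b h)

lemma col_chain (hshape : IsHookShape m n R C) (hss : IsSemistandard m n R C t)
    {a b j : ℕ} (hab : a ≤ b) : memShape m R C b j → t a j ≤ t b j := by
  induction b, hab using Nat.le_induction with
  | base => exact fun _ => le_rfl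
  | succ b hab ih =>
      exact fun h => le_trans (ih (memShape_mono_col hshape (Nat.le_succ b) h)) (hss.colLe b j h)

lemma pmem_above {B B' : ℕ → ℕ} {i j : ℕ} (hi : i < m)
    (h : memShape m (pushedR R B) (pushedC C B') i j) : memShape m R C i (j + B i) := by
  simp only [memShape, pushedR, pushedC] at h ⊢; omega

lemma pmem_below {B B' : ℕ → ℕ} {i j : ℕ} (hi : m ≤ i)
    (h : memShape m (pushedR R B) (pushedC C B') i j) : memShape m R C (i + B' j) j := by
  simp only [memShape, pushedR, pushedC] at h ⊢; omega

end Aux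

section Steps
variable {m n : ℕ} {R C : ℕ → ℕ} {t : ℕ → ℕ → ℕ}

lemma hstep_below (hshape : IsHookShape m n R C) (hss : IsSemistandard m n R C t)
    {Ba Ba' Bb Bb' : ℕ → ℕ}
    (ha : IsTrivialExtractable m n R C t Ba Ba')
    (hb : IsTrivialExtractable m n R C t Bb Bb') {i j : ℕ} (hi : m ≤ i)
    (hma : memShape m (pushedR R Ba) (pushedC C Ba') i (j+1))
    (hmb : memShape m (pushedR R Bb) (pushedC C Bb') i (j+1)) :
    t (i + Ba' j) j ≤ t (i + max (Ba' (j+1)) (Bb' (j+1))) (j+1) ∧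
    (m < t (i + Ba' j) j → t (i + Ba' j) j < t (i + max (Ba' (j+1)) (Bb' (j+1))) (j+1)) := by
  have hni : ¬ i < m := not_lt.mpr hi
  have step1 : t (i + Ba' j) j ≤ t (i + Ba' (j+1)) (j+1) := by
    have := ha.pushSS.rowLe i j hma
    simpa [pushedT, hni] using this
  have step1' : m < t (i + Ba' j) j → t (i + Ba' j) j < t (i + Ba' (j+1)) (j+1) := by
    intro h
    have := ha.pushSS.rowLt i j hma (by simpa [pushedT, hni] using h)
    simpa [pushedT, hni] using this
  have hmem : memShape m R C (i + max (Ba' (j+1)) (Bb' (j+1))) (j+1) := by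
    rcases le_total (Ba' (j+1)) (Bb' (j+1)) with h | h
    · rw [max_eq_right h]; exact pmem_below hi hmb
    · rw [max_eq_left h]; exact pmem_below hi hma
  have step2 : t (i + Ba' (j+1)) (j+1) ≤ t (i + max (Ba' (j+1)) (Bb' (j+1))) (j+1) :=
    col_chain hshape hss (by omega) hmem
  exact ⟨le_trans step1 step2, fun h => lt_of_lt_of_le (step1' h) step2⟩

lemma vstep_above (hshape : IsHookShape m n R C) (hss : IsSemistandard m n R C t)
    {Ba Ba' Bb Bb' : ℕ → ℕ}
    (ha : IsTrivialExtractable m n R C t Ba Ba')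
    (hb : IsTrivialExtractable m n R C t Bb Bb') {i j : ℕ} (hi1 : i + 1 < m)
    (hma : memShape m (pushedR R Ba) (pushedC C Ba') (i+1) j)
    (hmb : memShape m (pushedR R Bb) (pushedC C Bb') (i+1) j) :
    t i (j + Ba i) ≤ t (i+1) (j + max (Ba (i+1)) (Bb (i+1))) ∧
    (t i (j + Ba i) ≤ m → t i (j + Ba i) < t (i+1) (j + max (Ba (i+1)) (Bb (i+1)))) := by
  have hi : i < m := by omega
  have step1 : t i (j + Ba i) ≤ t (i+1) (j + Ba (i+1)) := by
    have := ha.pushSS.colLe i j hma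
    simpa [pushedT, hi, hi1] using this
  have step1' : t i (j + Ba i) ≤ m → t i (j + Ba i) < t (i+1) (j + Ba (i+1)) := by
    intro h
    have := ha.pushSS.colLt i j hma (by simpa [pushedT, hi] using h)
    simpa [pushedT, hi, hi1] using this
  have hmem : memShape m R C (i+1) (j + max (Ba (i+1)) (Bb (i+1))) := by
    rcases le_total (Ba (i+1)) (Bb (i+1)) with h | h
    · rw [max_eq_right h]; exact pmem_above hi1 hmb
    · rw [max_eq_left h]; exact pmem_above hi1 hma
  have step2 : t (i+1) (j + Ba (i+1)) ≤ t (i+1) (j + max (Ba (i+1)) (Bb (i+1))) :=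
    row_chain hshape hss (by omega) hmem
  exact ⟨le_trans step1 step2, fun h => lt_of_lt_of_le (step1' h) step2⟩

lemma vstep_boundary (hshape : IsHookShape m n R C) (hss : IsSemistandard m n R C t)
    {Ba Ba' Bb Bb' : ℕ → ℕ}
    (ha : IsTrivialExtractable m n R C t Ba Ba')
    (hb : IsTrivialExtractable m n R C t Bb Bb') {i j : ℕ} (hi : i < m) (hm : m ≤ i + 1)
    (hma : memShape m (pushedR R Ba) (pushedC C Ba') (i+1) j)
    (hmb : memShape m (pushedR R Bb) (pushedC C Bb') (i+1) j) :
    t i (j + Ba i) ≤ t (i + 1 + max (Ba' j) (Bb' j)) j ∧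
    (t i (j + Ba i) ≤ m → t i (j + Ba i) < t (i + 1 + max (Ba' j) (Bb' j)) j) := by
  have hni : ¬ i + 1 < m := not_lt.mpr hm
  have step1 : t i (j + Ba i) ≤ t (i + 1 + Ba' j) j := by
    have := ha.pushSS.colLe i j hma
    simpa [pushedT, hi, hni] using this
  have step1' : t i (j + Ba i) ≤ m → t i (j + Ba i) < t (i + 1 + Ba' j) j := by
    intro h
    have := ha.pushSS.colLt i j hma (by simpa [pushedT, hi] using h)
    simpa [pushedT, hi, hni] using this
  have hmem : memShape m R C (i + 1 + max (Ba' j) (Bb' j)) j := by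
    rcases le_total (Ba' j) (Bb' j) with h | h
    · rw [max_eq_right h]; exact pmem_below hm hmb
    · rw [max_eq_left h]; exact pmem_below hm hma
  have step2 : t (i + 1 + Ba' j) j ≤ t (i + 1 + max (Ba' j) (Bb' j)) j :=
    col_chain hshape hss (by omega) hmem
  exact ⟨le_trans step1 step2, fun h => lt_of_lt_of_le (step1' h) step2⟩

end Steps

section Main
variable {m n : ℕ} {R C : ℕ → ℕ} {t : ℕ → ℕ → ℕ}

lemma max_extractable (hshape : IsHookShape m n R C) (hss : IsSemistandard m n R C t)
    {B₁ B₁' B₂ B₂' : ℕ → ℕ}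
    (h1 : IsTrivialExtractable m n R C t B₁ B₁')
    (h2 : IsTrivialExtractable m n R C t B₂ B₂') :
    IsTrivialExtractable m n R C t (fun i => max (B₁ i) (B₂ i))
      (fun j => max (B₁' j) (B₂' j)) := by
  have memiff : ∀ i j, memShape m (pushedR R (fun i => max (B₁ i) (B₂ i)))
      (pushedC C (fun j => max (B₁' j) (B₂' j))) i j ↔
      (memShape m (pushedR R B₁) (pushedC C B₁') i j ∧
       memShape m (pushedR R B₂) (pushedC C B₂') i j) := by
    intro i j; simp only [memShape, pushedR, pushedC]; omega
  refine ⟨?_, ?_, ?_, ?_, ?_, ?_, ?_, ?_, ?_⟩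
  · exact fun i hi => max_le (h1.ble i hi) (h2.ble i hi)
  · intro i hi; simp [h1.bzero i hi, h2.bzero i hi]
  · exact fun i i' hii' hi' => max_le_max (h1.bmono hii' hi') (h2.bmono hii' hi')
  · exact fun j => max_le (h1.b'le j) (h2.b'le j)
  · exact fun j j' h => max_le_max (h1.b'mono h) (h2.b'mono h)
  · intro i hi j hj
    rcases lt_max_iff.mp hj with h | h
    · exact h1.trivTop i hi j h
    · exact h2.trivTop i hi j h
  · intro j k hk
    rcases lt_max_iff.mp hk with h | h
    · exact h1.trivBot j k h
    · exact h2.trivBot j k h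
  · constructor
    · intro i i' hii' hi'
      have a1 := h1.pushShape.rmono hii' hi'
      have a2 := h2.pushShape.rmono hii' hi'
      simp only [pushedR] at a1 a2 ⊢; omega
    · intro i hi; have := hshape.rzero i hi; simp only [pushedR]; omega
    · intro j j' hjj'
      have a1 := h1.pushShape.cmono hjj'
      have a2 := h2.pushShape.cmono hjj'
      simp only [pushedC] at a1 a2 ⊢; omega
    · intro j hj; have := hshape.czero j hj; simp only [pushedC]; omega
    · intro j hj
      simp only [pushedC] at hj
      have a1 := h1.pushShape.hook j (by simp only [pushedC]; omega)
      have a2 := h2.pushShape.hook j (by simp only [pushedC]; omega)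
      simp only [pushedR] at a1 a2 ⊢; omega
  · constructor
    · intro i j hmem
      by_cases hi : i < m
      · simpa [pushedT, hi] using hss.lb _ _ (pmem_above hi hmem)
      · simpa [pushedT, hi] using hss.lb _ _ (pmem_below (le_of_not_gt hi) hmem)
    · intro i j hmem
      by_cases hi : i < m
      · simpa [pushedT, hi] using hss.ub _ _ (pmem_above hi hmem)
      · simpa [pushedT, hi] using hss.ub _ _ (pmem_below (le_of_not_gt hi) hmem)
    · -- rowLe
      intro i j hmem
      obtain ⟨hm1, hm2⟩ := (memiff i (j+1)).1 hmem
      by_cases hi : i < m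
      · simp only [pushedT, if_pos hi]
        rcases le_total (B₁ i) (B₂ i) with h | h
        · rw [max_eq_right h]
          have := h2.pushSS.rowLe i j hm2
          simpa [pushedT, hi] using this
        · rw [max_eq_left h]
          have := h1.pushSS.rowLe i j hm1
          simpa [pushedT, hi] using this
      · have hi' := le_of_not_gt hi
        simp only [pushedT, if_neg hi]
        rcases le_total (B₁' j) (B₂' j) with h | h
        · rw [max_eq_right h, max_comm (B₁' (j+1)) (B₂' (j+1))]
          exact (hstep_below hshape hss h2 h1 hi' hm2 hm1).1
        · rw [max_eq_left h]
          exact (hstep_below hshape hss h1 h2 hi' hm1 hm2).1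
    · -- rowLt
      intro i j hmem hlt
      obtain ⟨hm1, hm2⟩ := (memiff i (j+1)).1 hmem
      by_cases hi : i < m
      · simp only [pushedT, if_pos hi] at hlt ⊢
        rcases le_total (B₁ i) (B₂ i) with h | h
        · rw [max_eq_right h] at hlt ⊢
          have := h2.pushSS.rowLt i j hm2 (by simpa [pushedT, hi] using hlt)
          simpa [pushedT, hi] using this
        · rw [max_eq_left h] at hlt ⊢
          have := h1.pushSS.rowLt i j hm1 (by simpa [pushedT, hi] using hlt)
          simpa [pushedT, hi] using this
      · have hi' := le_of_not_gt hi
        simp only [pushedT, if_neg hi] at hlt ⊢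
        rcases le_total (B₁' j) (B₂' j) with h | h
        · rw [max_eq_right h] at hlt ⊢
          rw [max_comm (B₁' (j+1)) (B₂' (j+1))]
          exact (hstep_below hshape hss h2 h1 hi' hm2 hm1).2 hlt
        · rw [max_eq_left h] at hlt ⊢
          exact (hstep_below hshape hss h1 h2 hi' hm1 hm2).2 hlt
    · -- colLe
      intro i j hmem
      obtain ⟨hm1, hm2⟩ := (memiff (i+1) j).1 hmem
      by_cases hi1 : i + 1 < m
      · have hi : i < m := by omega
        simp only [pushedT, if_pos hi, if_pos hi1]
        rcases le_total (B₁ i) (B₂ i) with h | h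
        · rw [max_eq_right h, max_comm (B₁ (i+1)) (B₂ (i+1))]
          exact (vstep_above hshape hss h2 h1 hi1 hm2 hm1).1
        · rw [max_eq_left h]
          exact (vstep_above hshape hss h1 h2 hi1 hm1 hm2).1
      · by_cases hi : i < m
        · have hm' : m ≤ i + 1 := le_of_not_gt hi1
          simp only [pushedT, if_pos hi, if_neg hi1]
          rcases le_total (B₁ i) (B₂ i) with h | h
          · rw [max_eq_right h, max_comm (B₁' j) (B₂' j)]
            exact (vstep_boundary hshape hss h2 h1 hi hm' hm2 hm1).1
          · rw [max_eq_left h]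
            exact (vstep_boundary hshape hss h1 h2 hi hm' hm1 hm2).1
        · have hmi : m ≤ i := le_of_not_gt hi
          simp only [pushedT, if_neg hi, if_neg hi1]
          have hmem' : memShape m R C (i + 1 + max (B₁' j) (B₂' j)) j := by
            rcases le_total (B₁' j) (B₂' j) with h | h
            · rw [max_eq_right h]; exact pmem_below (by omega) hm2
            · rw [max_eq_left h]; exact pmem_below (by omega) hm1
          have e : i + 1 + max (B₁' j) (B₂' j) = (i + max (B₁' j) (B₂' j)) + 1 := by omega
          rw [e] at hmem' ⊢
          exact hss.colLe _ j hmem'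
    · -- colLt
      intro i j hmem hle
      obtain ⟨hm1, hm2⟩ := (memiff (i+1) j).1 hmem
      by_cases hi1 : i + 1 < m
      · have hi : i < m := by omega
        simp only [pushedT, if_pos hi, if_pos hi1] at hle ⊢
        rcases le_total (B₁ i) (B₂ i) with h | h
        · rw [max_eq_right h] at hle ⊢
          rw [max_comm (B₁ (i+1)) (B₂ (i+1))]
          exact (vstep_above hshape hss h2 h1 hi1 hm2 hm1).2 hle
        · rw [max_eq_left h] at hle ⊢
          exact (vstep_above hshape hss h1 h2 hi1 hm1 hm2).2 hle
      · by_cases hi : i < m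
        · have hm' : m ≤ i + 1 := le_of_not_gt hi1
          simp only [pushedT, if_pos hi, if_neg hi1] at hle ⊢
          rcases le_total (B₁ i) (B₂ i) with h | h
          · rw [max_eq_right h] at hle ⊢
            rw [max_comm (B₁' j) (B₂' j)]
            exact (vstep_boundary hshape hss h2 h1 hi hm' hm2 hm1).2 hle
          · rw [max_eq_left h] at hle ⊢
            exact (vstep_boundary hshape hss h1 h2 hi hm' hm1 hm2).2 hle
        · have hmi : m ≤ i := le_of_not_gt hi
          simp only [pushedT, if_neg hi, if_neg hi1] at hle ⊢
          have hmem' : memShape m R C (i + 1 + max (B₁' j) (B₂' j)) j := by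
            rcases le_total (B₁' j) (B₂' j) with h | h
            · rw [max_eq_right h]; exact pmem_below (by omega) hm2
            · rw [max_eq_left h]; exact pmem_below (by omega) hm1
          have e : i + 1 + max (B₁' j) (B₂' j) = (i + max (B₁' j) (B₂' j)) + 1 := by omega
          rw [e] at hmem' ⊢
          exact hss.colLt _ j hmem' hle

end Main

section Thm
variable {m n : ℕ} {R C : ℕ → ℕ} {t : ℕ → ℕ → ℕ}

lemma zero_extractable (hshape : IsHookShape m n R C) (hss : IsSemistandard m n R C t) :
    IsTrivialExtractable m n R C t (fun _ => 0) (fun _ => 0) := by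
  refine ⟨fun i _ => Nat.zero_le _, fun _ _ => rfl, fun _ _ _ _ => le_rfl,
    fun _ => Nat.zero_le _, fun _ _ _ => le_rfl,
    fun _ _ _ h => absurd h (Nat.not_lt_zero _), fun _ _ h => absurd h (Nat.not_lt_zero _),
    ?_, ?_⟩
  all_goals {
    have e1 : pushedR R (fun _ => 0) = R := funext fun i => Nat.sub_zero _
    have e2 : pushedC C (fun _ => 0) = C := funext fun j => Nat.sub_zero _
    have e3 : pushedT m t (fun _ => 0) (fun _ => 0) = t := by
      funext i j; simp [pushedT]
    rw [e1, e2]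
    try rw [e3]
    first | exact hshape | exact hss }

theorem exists_greatest (m n : ℕ) (R C : ℕ → ℕ) (t : ℕ → ℕ → ℕ)
    (hshape : IsHookShape m n R C) (hss : IsSemistandard m n R C t) :
    ∃ B B', GreatestExtractable m n R C t B B' := by
  set S : Set ℕ := {k | ∃ B B', IsTrivialExtractable m n R C t B B' ∧
    ((∑ i ∈ Finset.range m, B i) + ∑ j ∈ Finset.range n, B' j) = k} with hS
  have hne : S.Nonempty := ⟨0, ⟨fun _ => 0, fun _ => 0, zero_extractable hshape hss, by simp⟩⟩
  have hbdd : BddAbove S := by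
    refine ⟨(∑ i ∈ Finset.range m, R i) + ∑ j ∈ Finset.range n, C j, ?_⟩
    rintro k ⟨B, B', hB, rfl⟩
    refine add_le_add (Finset.sum_le_sum fun i hi => hB.ble i (Finset.mem_range.mp hi))
      (Finset.sum_le_sum fun j _ => hB.b'le j)
  obtain ⟨B, B', hB, hsum⟩ := Nat.sSup_mem hne hbdd
  refine ⟨B, B', hB, ?_⟩
  intro B₂ B₂' h₂
  have hM := max_extractable hshape hss hB h₂
  have hMle : (∑ i ∈ Finset.range m, max (B i) (B₂ i)) +
      ∑ j ∈ Finset.range n, max (B' j) (B₂' j) ≤ sSup S :=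
    le_csSup hbdd ⟨_, _, hM, rfl⟩
  rw [← hsum] at hMle
  have hs1 : ∑ i ∈ Finset.range m, B i ≤ ∑ i ∈ Finset.range m, max (B i) (B₂ i) :=
    Finset.sum_le_sum fun i _ => le_max_left _ _
  have hs2 : ∑ j ∈ Finset.range n, B' j ≤ ∑ j ∈ Finset.range n, max (B' j) (B₂' j) :=
    Finset.sum_le_sum fun j _ => le_max_left _ _
  constructor
  · intro i
    by_cases hi : i < m
    · by_contra hc
      push_neg at hc
      have : ∑ i ∈ Finset.range m, B i < ∑ i ∈ Finset.range m, max (B i) (B₂ i) :=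
        Finset.sum_lt_sum (fun i _ => le_max_left _ _)
          ⟨i, Finset.mem_range.mpr hi, by omega⟩
      omega
    · rw [h₂.bzero i (le_of_not_gt hi)]; exact Nat.zero_le _
  · intro j
    by_cases hj : j < n
    · by_contra hc
      push_neg at hc
      have : ∑ j ∈ Finset.range n, B' j < ∑ j ∈ Finset.range n, max (B' j) (B₂' j) :=
        Finset.sum_lt_sum (fun j _ => le_max_left _ _)
          ⟨j, Finset.mem_range.mpr hj, by omega⟩
      omega
    · have hc0 : C j = 0 := hshape.czero j (by omega)
      have := h₂.b'le j
      omega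



end Thm

/-- If two trivial pairs are extractable from a semistandard sl(m,n)-tableau `t`, then so
is the trivial pair given by the componentwise maxima of their shape parameters.
Consequently `t` admits a unique largest trivial extractable pair. -/
theorem union_extractable_and_unique_largest (m n : ℕ) (R C : ℕ → ℕ) (t : ℕ → ℕ → ℕ)
    (hshape : IsHookShape m n R C) (hss : IsSemistandard m n R C t) :
    (∀ B₁ B₁' B₂ B₂', IsTrivialExtractable m n R C t B₁ B₁' →
        IsTrivialExtractable m n R C t B₂ B₂' →
        IsTrivialExtractable m n R C t (fun i => max (B₁ i) (B₂ i))
          (fun j => max (B₁' j) (B₂' j))) ∧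
    (∃ B B', GreatestExtractable m n R C t B B') ∧
    (∀ B B' Bb Bb', GreatestExtractable m n R C t B B' →
        GreatestExtractable m n R C t Bb Bb' → B = Bb ∧ B' = Bb') := by
  refine ⟨fun B₁ B₁' B₂ B₂' h1 h2 => max_extractable hshape hss h1 h2,
    exists_greatest m n R C t hshape hss, ?_⟩
  intro B B' Bb Bb' hG hGb
  obtain ⟨hB, hmaxB⟩ := hG
  obtain ⟨hBb, hmaxBb⟩ := hGb
  have h1 := hmaxB _ _ hBb
  have h2 := hmaxBb _ _ hB
  exact ⟨funext fun i => le_antisymm (h2.1 i) (h1.1 i),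
    funext fun j => le_antisymm (h2.2 j) (h1.2 j)⟩
end

section
/- If U is a quasistandard sl(m,n)-tableau of shape μ ≤ λ, then push(pull^{λ-μ}(U)) = U; that is, the trivial pair of shape λ-μ is the largest trivial extractable pair of pull^{λ-μ}(U). -/
/-- The ordering μ ≤ λ on shapes (componentwise on (a,a')), expressed on row lengths and
column heights: the differences R - R' and C - C' are nonnegative and weakly decreasing. -/
def ShapeLE (m : ℕ) (R' C' R C : ℕ → ℕ) : Prop :=
  (∀ i, R' i ≤ R i) ∧ (∀ ⦃i i'⦄, i ≤ i' → i' < m → R i' + R' i ≤ R i + R' i') ∧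
  (∀ j, C' j ≤ C j) ∧ (∀ ⦃j j'⦄, j ≤ j' → C j' + C' j ≤ C j + C' j')

/-- pull^{λ-μ}(u): prepend to the filling `u` of shape μ = (R',C') the trivial pair of
shape λ - μ: fill the first R i - R' i boxes of row i (i < m) with i, and the first
C j - C' j below-line boxes of column j with m+j. -/
def pullT (m : ℕ) (R C R' C' : ℕ → ℕ) (u : ℕ → ℕ → ℕ) : ℕ → ℕ → ℕ :=
  fun i j =>
    if i < m then
      (if j < R i - R' i then i + 1 else u i (j - (R i - R' i)))
    else
      (if i - m < C j - C' j then m + j + 1 else u (i - (C j - C' j)) j)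

/-!
Let `(B, B')` be a trivial extractable pair of `pull^{λ-μ}(U)`. Its excess over the pulled pair
`λ - μ` need not be weakly decreasing, so replace it by its suffix maxima `(E, E')`. Where `E` (or
`E'`) drops, the maximum is attained at that very row (column), so there `push_B(pull U)` and
`push_E(U)` agree, while everywhere `push_B(pull U) ≤ push_E(U)`. Across a drop, the shape and
semistandardness of `push_E(U)` are therefore inherited from `push_B(pull U)`, and elsewhere
from `U`. The entries of `U` covered by `(E, E')` are trivial by strictness of the columns above
the line and of the rows below it. Hence `(E, E')` is a trivial extractable pair of `U`, which
vanishes by quasistandardness; that is, `B ≤ λ - μ`.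
-/

lemma memShape_mono {m : ℕ} {R₁ C₁ R₂ C₂ : ℕ → ℕ} (hR : ∀ i, R₁ i ≤ R₂ i)
    (hC : ∀ j, C₁ j ≤ C₂ j) {i j : ℕ} (h : memShape m R₁ C₁ i j) : memShape m R₂ C₂ i j := by
  rcases h with ⟨hi, hj⟩ | ⟨hi, hj⟩
  · exact Or.inl ⟨hi, hj.trans_le (hR i)⟩
  · exact Or.inr ⟨hi, hj.trans_le (hC j)⟩

section Pushed

variable {m : ℕ} {R C E E' : ℕ → ℕ} {t : ℕ → ℕ → ℕ} {i j : ℕ}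

lemma memShape_of_memShape_pushed_of_lt (hi : i < m)
    (h : memShape m (pushedR R E) (pushedC C E') i j) : memShape m R C i (j + E i) := by
  simp only [memShape, pushedR, pushedC] at h ⊢
  omega

lemma memShape_of_memShape_pushed_of_le (hi : m ≤ i)
    (h : memShape m (pushedR R E) (pushedC C E') i j) : memShape m R C (i + E' j) j := by
  simp only [memShape, pushedR, pushedC] at h ⊢
  omega

lemma memShape_add_of_memShape_pushed (hE : ∀ i, m ≤ i → E i = 0)
    (h : memShape m (pushedR R E) (pushedC C E') i j) : memShape m R C i (j + E i) := by
  rcases lt_or_ge i m with hi | hi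
  · exact memShape_of_memShape_pushed_of_lt hi h
  · rw [hE i hi, add_zero]
    simp only [memShape, pushedR, pushedC] at h ⊢
    omega

lemma pushedT_of_lt (hi : i < m) : pushedT m t E E' i j = t i (j + E i) := if_pos hi

lemma pushedT_of_le (hi : m ≤ i) : pushedT m t E E' i j = t (i + E' j) j := if_neg hi.not_gt

end Pushed

namespace IsHookShape

variable {m n : ℕ} {R C : ℕ → ℕ}

lemma antitone_rows (h : IsHookShape m n R C) : Antitone R := by
  intro i i' hii'
  rcases lt_or_ge i' m with hi' | hi'
  · exact h.rmono hii' hi'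
  · simp [h.rzero i' hi']

lemma memShape_of_le_row (h : IsHookShape m n R C) {i i' j : ℕ} (hi : i' ≤ i)
    (hm : memShape m R C i j) : memShape m R C i' j := by
  rcases hm with ⟨h1, h2⟩ | ⟨h1, h2⟩
  · exact Or.inl ⟨hi.trans_lt h1, h2.trans_le (h.rmono hi h1)⟩
  · rcases lt_or_ge i' m with hi' | hi'
    · exact Or.inl ⟨hi', (h.hook j (by omega)).trans_le (h.rmono (by omega) (by omega))⟩
    · exact Or.inr ⟨hi', by omega⟩

lemma memShape_of_le_col (h : IsHookShape m n R C) {i j j' : ℕ} (hj : j' ≤ j)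
    (hm : memShape m R C i j) : memShape m R C i j' := by
  rcases hm with ⟨h1, h2⟩ | ⟨h1, h2⟩
  · exact Or.inl ⟨h1, by omega⟩
  · exact Or.inr ⟨h1, h2.trans_le (h.cmono hj)⟩

end IsHookShape

namespace IsSemistandard

variable {m n : ℕ} {R C : ℕ → ℕ} {t : ℕ → ℕ → ℕ}

lemma add_one_le_of_le (hss : IsSemistandard m n R C t) (hsh : IsHookShape m n R C)
    {i j : ℕ} (hm : memShape m R C i j) (hs : t i j ≤ m) : i + 1 ≤ t i j := by
  induction i with
  | zero => exact hss.lb 0 j hm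
  | succ i ih =>
    have hle := hss.colLe i j hm
    have := ih (hsh.memShape_of_le_row i.le_succ hm) (hle.trans hs)
    have := hss.colLt i j hm (hle.trans hs)
    omega

lemma lt_of_memShape_of_le (hss : IsSemistandard m n R C t) (hsh : IsHookShape m n R C)
    {i j : ℕ} (hi : m ≤ i) (hm : memShape m R C i j) : m < t i j := by
  by_contra! hs
  have := hss.add_one_le_of_le hsh hm hs
  omega

lemma col_mono (hss : IsSemistandard m n R C t) (hsh : IsHookShape m n R C)
    {i i' j : ℕ} (hi : i ≤ i') (hm : memShape m R C i' j) : t i j ≤ t i' j := by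
  induction i', hi using Nat.le_induction with
  | base => rfl
  | succ k _ ih => exact (ih (hsh.memShape_of_le_row k.le_succ hm)).trans (hss.colLe k j hm)

lemma row_mono (hss : IsSemistandard m n R C t) (hsh : IsHookShape m n R C)
    {i j j' : ℕ} (hj : j ≤ j') (hm : memShape m R C i j') : t i j ≤ t i j' := by
  induction j', hj using Nat.le_induction with
  | base => rfl
  | succ k _ ih => exact (ih (hsh.memShape_of_le_col k.le_succ hm)).trans (hss.rowLe i k hm)

lemma col_add_sub_le (hss : IsSemistandard m n R C t) (hsh : IsHookShape m n R C)
    {i i' j : ℕ} (hi : i ≤ i') (hm : memShape m R C i' j) (hs : t i' j ≤ m) :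
    t i j + (i' - i) ≤ t i' j := by
  induction i', hi using Nat.le_induction with
  | base => simp
  | succ k _ ih =>
    have hle := hss.colLe k j hm
    have := ih (hsh.memShape_of_le_row k.le_succ hm) (hle.trans hs)
    have := hss.colLt k j hm (hle.trans hs)
    omega

lemma row_add_sub_le (hss : IsSemistandard m n R C t) (hsh : IsHookShape m n R C)
    {i j j' : ℕ} (hj : j ≤ j') (hi : m ≤ i) (hm : memShape m R C i j') :
    t i j + (j' - j) ≤ t i j' := by
  induction j', hj using Nat.le_induction with
  | base => simp
  | succ k _ ih =>
    have hm' := hsh.memShape_of_le_col k.le_succ hm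
    have := ih hm'
    have := hss.rowLt i k hm (hss.lt_of_memShape_of_le hsh hi hm')
    omega

lemma add_add_one_le (hss : IsSemistandard m n R C t) (hsh : IsHookShape m n R C)
    {i j : ℕ} (hi : m ≤ i) (hm : memShape m R C i j) : m + j + 1 ≤ t i j := by
  have := hss.row_add_sub_le hsh j.zero_le hi hm
  have := hss.lt_of_memShape_of_le hsh hi (hsh.memShape_of_le_col j.zero_le hm)
  omega

lemma pushed {E E' : ℕ → ℕ} (hss : IsSemistandard m n R C t) (hsh : IsHookShape m n R C)
    (hrow : ∀ i j, m ≤ i → memShape m (pushedR R E) (pushedC C E') i (j + 1) →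
      pushedT m t E E' i j < pushedT m t E E' i (j + 1))
    (hcolLe : ∀ i j, i < m → memShape m (pushedR R E) (pushedC C E') (i + 1) j →
      pushedT m t E E' i j ≤ pushedT m t E E' (i + 1) j)
    (hcolLt : ∀ i j, i < m → memShape m (pushedR R E) (pushedC C E') (i + 1) j →
      pushedT m t E E' i j ≤ m → pushedT m t E E' i j < pushedT m t E E' (i + 1) j) :
    IsSemistandard m n (pushedR R E) (pushedC C E') (pushedT m t E E') where
  lb i j hm := by
    rcases lt_or_ge i m with hi | hi
    · rw [pushedT_of_lt hi]; exact hss.lb _ _ (memShape_of_memShape_pushed_of_lt hi hm)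
    · rw [pushedT_of_le hi]; exact hss.lb _ _ (memShape_of_memShape_pushed_of_le hi hm)
  ub i j hm := by
    rcases lt_or_ge i m with hi | hi
    · rw [pushedT_of_lt hi]; exact hss.ub _ _ (memShape_of_memShape_pushed_of_lt hi hm)
    · rw [pushedT_of_le hi]; exact hss.ub _ _ (memShape_of_memShape_pushed_of_le hi hm)
  rowLe i j hm := by
    rcases lt_or_ge i m with hi | hi
    · rw [pushedT_of_lt hi, pushedT_of_lt hi, add_right_comm]
      exact hss.rowLe _ _ (add_right_comm j 1 (E i) ▸ memShape_of_memShape_pushed_of_lt hi hm)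
    · exact (hrow i j hi hm).le
  rowLt i j hm hs := by
    rcases lt_or_ge i m with hi | hi
    · rw [pushedT_of_lt hi] at hs
      rw [pushedT_of_lt hi, pushedT_of_lt hi, add_right_comm]
      exact hss.rowLt _ _ (add_right_comm j 1 (E i) ▸ memShape_of_memShape_pushed_of_lt hi hm) hs
    · exact hrow i j hi hm
  colLe i j hm := by
    rcases lt_or_ge i m with hi | hi
    · exact hcolLe i j hi hm
    · have hm' := memShape_of_memShape_pushed_of_le (i := i + 1) (by omega) hm
      rw [pushedT_of_le hi, pushedT_of_le (by omega), add_right_comm]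
      exact hss.colLe _ _ (add_right_comm i 1 (E' j) ▸ hm')
  colLt i j hm hs := by
    rcases lt_or_ge i m with hi | hi
    · exact hcolLt i j hi hm hs
    · have hm' := memShape_of_memShape_pushed_of_le (i := i + 1) (by omega) hm
      rw [pushedT_of_le hi] at hs
      have := hss.lt_of_memShape_of_le hsh (i := i + E' j) (by omega)
        (hsh.memShape_of_le_row (by omega) hm')
      omega

end IsSemistandard

section Pull

variable {m n : ℕ} {R C R' C' B B' : ℕ → ℕ} {u : ℕ → ℕ → ℕ} {i j : ℕ}

lemma pullT_of_lt_of_le (hi : i < m) (hj : R i - R' i ≤ j) :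
    pullT m R C R' C' u i j = u i (j - (R i - R' i)) := by
  simp only [pullT, if_pos hi, if_neg (not_lt.2 hj)]

lemma pullT_of_le_of_le (hi : m ≤ i) (hj : C j - C' j ≤ i - m) :
    pullT m R C R' C' u i j = u (i - (C j - C' j)) j := by
  simp only [pullT, if_neg (not_lt.2 hi), if_neg (not_lt.2 hj)]

lemma pushedT_pullT_of_lt (hi : i < m) :
    pushedT m (pullT m R C R' C' u) B B' i j =
      if j + B i < R i - R' i then i + 1 else u i (j + B i - (R i - R' i)) := by
  simp only [pushedT, pullT, if_pos hi]

lemma pushedT_pullT_of_le (hi : m ≤ i) :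
    pushedT m (pullT m R C R' C' u) B B' i j =
      if i + B' j - m < C j - C' j then m + j + 1 else u (i + B' j - (C j - C' j)) j := by
  simp only [pushedT, pullT, if_neg (not_lt.2 hi), if_neg (not_lt.2 (hi.trans (i.le_add_right _)))]

lemma pushedT_pullT_self (i j : ℕ) :
    pushedT m (pullT m R C R' C' u) (fun i => R i - R' i) (fun j => C j - C' j) i j = u i j := by
  rcases lt_or_ge i m with hi | hi
  · rw [pushedT_pullT_of_lt hi, if_neg (by omega), Nat.add_sub_cancel]
  · rw [pushedT_pullT_of_le hi, if_neg (by omega), Nat.add_sub_cancel]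

lemma isTrivialExtractable_pullT (hlam : IsHookShape m n R C) (hmu : IsHookShape m n R' C')
    (hle : ShapeLE m R' C' R C) (hu : IsSemistandard m n R' C' u) :
    IsTrivialExtractable m n R C (pullT m R C R' C' u)
      (fun i => R i - R' i) (fun j => C j - C' j) := by
  have hpR : pushedR R (fun i => R i - R' i) = R' := funext fun i => by
    have := hle.1 i; simp only [pushedR]; omega
  have hpC : pushedC C (fun j => C j - C' j) = C' := funext fun j => by
    have := hle.2.2.1 j; simp only [pushedC]; omega
  have hpT : pushedT m (pullT m R C R' C' u) (fun i => R i - R' i) (fun j => C j - C' j) = u :=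
    funext fun i => funext (pushedT_pullT_self i)
  exact {
    ble := fun i _ => Nat.sub_le _ _
    bzero := fun i hi => by simp [hlam.rzero i hi]
    bmono := fun i i' h h' => by
      have := hle.2.1 h h'; have := hle.1 i; have := hle.1 i'; omega
    b'le := fun j => Nat.sub_le _ _
    b'mono := fun j j' h => by
      have := hle.2.2.2 h; have := hle.2.2.1 j; have := hle.2.2.1 j'; omega
    trivTop := fun i hi j hj => by simp only [pullT, if_pos hi, if_pos hj]
    trivBot := fun j k hk => by
      simp only [pullT, if_neg (show ¬ m + k < m by omega), Nat.add_sub_cancel_left, if_pos hk]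
    pushShape := by rw [hpR, hpC]; exact hmu
    pushSS := by rw [hpR, hpC, hpT]; exact hu }

end Pull

/-- Suffix maxima of the excess of `B` over the lengths `L - L'` of a pulled trivial pair;
unlike the excess itself, they are weakly decreasing. -/
def excess (b : ℕ) (L L' B : ℕ → ℕ) (i : ℕ) : ℕ :=
  (Finset.Ico i b).sup fun k => B k - (L k - L' k)

section Excess

variable {b : ℕ} {L L' B : ℕ → ℕ}

lemma excess_antitone : Antitone (excess b L L' B) :=
  fun _ _ h => Finset.sup_mono (Finset.Ico_subset_Ico h le_rfl)

lemma excess_of_le {i : ℕ} (hi : b ≤ i) : excess b L L' B i = 0 := by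
  simp [excess, Finset.Ico_eq_empty_of_le hi]

lemma lt_of_excess_pos {i : ℕ} (h : 0 < excess b L L' B i) : i < b := by
  by_contra! hi
  rw [excess_of_le hi] at h
  exact h.false

lemma sub_le_excess (hB : ∀ k, b ≤ k → B k = 0) (k : ℕ) :
    B k - (L k - L' k) ≤ excess b L L' B k := by
  rcases lt_or_ge k b with hk | hk
  · exact Finset.le_sup (f := fun k => B k - (L k - L' k)) (Finset.mem_Ico.2 ⟨le_rfl, hk⟩)
  · simp [hB k hk]

lemma exists_eq_excess {i : ℕ} (h : 0 < excess b L L' B i) :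
    ∃ k, i ≤ k ∧ k < b ∧ excess b L L' B i = B k - (L k - L' k) := by
  obtain ⟨k, hk, he⟩ := Finset.exists_mem_eq_sup (Finset.Ico i b)
    ⟨i, Finset.mem_Ico.2 ⟨le_rfl, lt_of_excess_pos h⟩⟩ fun k => B k - (L k - L' k)
  exact ⟨k, (Finset.mem_Ico.1 hk).1, (Finset.mem_Ico.1 hk).2, he⟩

lemma excess_le (hBL : ∀ k, B k ≤ L k) (hL' : Antitone L') (i : ℕ) :
    excess b L L' B i ≤ L' i :=
  Finset.sup_le fun k hk => by
    have := hBL k; have := hL' (Finset.mem_Ico.1 hk).1; omega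

lemma eq_add_excess_of_lt {k : ℕ} (h : excess b L L' B (k + 1) < excess b L L' B k) :
    B k = L k - L' k + excess b L L' B k := by
  have hmax : excess b L L' B k = max (B k - (L k - L' k)) (excess b L L' B (k + 1)) := by
    rw [excess, excess, ← Finset.insert_Ico_add_one_left_eq_Ico (lt_of_excess_pos
      (Nat.zero_le _ |>.trans_lt h)), Finset.sup_insert]
  omega

lemma sub_excess_le (hB : ∀ k, b ≤ k → B k = 0) (hL'L : ∀ k, L' k ≤ L k) (k : ℕ) :
    L' k - excess b L L' B k ≤ L k - B k := by
  have := sub_le_excess (L := L) (L' := L') hB k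
  have := hL'L k
  omega

lemma antitone_sub_excess (hB : ∀ k, b ≤ k → B k = 0) (hL'L : ∀ k, L' k ≤ L k)
    (hL' : Antitone L') (hLB : Antitone fun k => L k - B k) :
    Antitone fun k => L' k - excess b L L' B k := by
  refine antitone_nat_of_succ_le fun k => ?_
  rcases (excess_antitone (b := b) (L := L) (L' := L') (B := B) (Nat.le_add_right k 1)).lt_or_eq
    with hlt | heq
  · have := eq_add_excess_of_lt hlt
    have := sub_excess_le hB hL'L (k + 1)
    have : L (k + 1) - B (k + 1) ≤ L k - B k := hLB (Nat.le_add_right k 1)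
    omega
  · have := hL' (Nat.le_add_right k 1)
    omega

end Excess

namespace IsTrivialExtractable

variable {m n : ℕ} {R C B B' : ℕ → ℕ} {t : ℕ → ℕ → ℕ}

lemma le_rows (hB : IsTrivialExtractable m n R C t B B') (i : ℕ) : B i ≤ R i := by
  rcases lt_or_ge i m with hi | hi
  · exact hB.ble i hi
  · simp [hB.bzero i hi]

lemma eq_zero_cols (hB : IsTrivialExtractable m n R C t B B') (hsh : IsHookShape m n R C)
    (j : ℕ) (hj : n ≤ j) : B' j = 0 := by
  have := hB.b'le j
  have := hsh.czero j (by omega)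
  omega

end IsTrivialExtractable

section Maximality

variable {m n : ℕ} {R C R' C' B B' : ℕ → ℕ} {u : ℕ → ℕ → ℕ} {i j : ℕ}

lemma eq_of_lt_excess_rows (hmu : IsHookShape m n R' C') (hu : IsSemistandard m n R' C' u)
    (hB : IsTrivialExtractable m n R C (pullT m R C R' C' u) B B')
    (hj : j < excess m R R' B i) : u i j = i + 1 := by
  obtain ⟨k, hik, hkm, hk⟩ := exists_eq_excess (by omega : 0 < excess m R R' B i)
  have hkj : u k j = k + 1 := by
    have := hB.trivTop k hkm (j + (R k - R' k)) (by omega)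
    rwa [pullT_of_lt_of_le hkm (by omega), Nat.add_sub_cancel] at this
  have hmem : memShape m R' C' k j := Or.inl ⟨hkm, by have := hB.ble k hkm; omega⟩
  have := hu.col_add_sub_le hmu hik hmem (by omega)
  have := hu.add_one_le_of_le hmu (hmu.memShape_of_le_row hik hmem) (by omega)
  omega

lemma eq_of_lt_excess_cols (hmu : IsHookShape m n R' C') (hu : IsSemistandard m n R' C' u)
    (hB : IsTrivialExtractable m n R C (pullT m R C R' C' u) B B') {k : ℕ}
    (hk : k < excess n C C' B' j) : u (m + k) j = m + j + 1 := by
  obtain ⟨j₁, hjj, -, hj₁⟩ := exists_eq_excess (by omega : 0 < excess n C C' B' j)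
  have hkj : u (m + k) j₁ = m + j₁ + 1 := by
    have := hB.trivBot j₁ (k + (C j₁ - C' j₁)) (by omega)
    rwa [pullT_of_le_of_le (by omega) (by omega), show m + (k + (C j₁ - C' j₁)) -
      (C j₁ - C' j₁) = m + k by omega] at this
  have hmem : memShape m R' C' (m + k) j₁ := Or.inr ⟨by omega, by have := hB.b'le j₁; omega⟩
  have := hu.row_add_sub_le hmu hjj (by omega) hmem
  have := hu.add_add_one_le hmu (by omega) (hmu.memShape_of_le_col hjj hmem)
  omega

lemma isHookShape_pushed_excess (hlam : IsHookShape m n R C) (hmu : IsHookShape m n R' C')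
    (hle : ShapeLE m R' C' R C) (hB : IsTrivialExtractable m n R C (pullT m R C R' C' u) B B') :
    IsHookShape m n (pushedR R' (excess m R R' B)) (pushedC C' (excess n C C' B')) where
  rmono _ _ h _ :=
    antitone_sub_excess hB.bzero hle.1 hmu.antitone_rows hB.pushShape.antitone_rows h
  rzero i hi := by simp [pushedR, hmu.rzero i hi]
  cmono _ _ h := antitone_sub_excess (hB.eq_zero_cols hlam) hle.2.2.1
    (fun _ _ h => hmu.cmono h) (fun _ _ h => hB.pushShape.cmono h) h
  czero j hj := by simp [pushedC, hmu.czero j hj]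
  hook j hj := by
    simp only [pushedR, pushedC] at hj ⊢
    rcases Nat.eq_zero_or_pos (excess m R R' B (m - 1)) with h0 | hpos
    · rw [h0]
      exact hmu.hook j (by omega)
    · have hm : m - 1 + 1 = m := by have := lt_of_excess_pos hpos; omega
      have hjump : excess m R R' B (m - 1 + 1) < excess m R R' B (m - 1) := by
        rwa [hm, excess_of_le le_rfl]
      have := eq_add_excess_of_lt hjump
      have hhook := hB.pushShape.hook j <| by
        have := sub_excess_le (hB.eq_zero_cols hlam) hle.2.2.1 j
        simp only [pushedC]; omega
      have := hle.1 (m - 1)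
      simp only [pushedR] at hhook
      omega

lemma memShape_pushed_of_memShape_pushed_excess (hlam : IsHookShape m n R C)
    (hle : ShapeLE m R' C' R C) (hB : IsTrivialExtractable m n R C (pullT m R C R' C' u) B B')
    (h : memShape m (pushedR R' (excess m R R' B)) (pushedC C' (excess n C C' B')) i j) :
    memShape m (pushedR R B) (pushedC C B') i j :=
  memShape_mono (sub_excess_le hB.bzero hle.1) (sub_excess_le (hB.eq_zero_cols hlam) hle.2.2.1) h

lemma pushedT_pullT_le_pushedT_excess (hlam : IsHookShape m n R C)
    (hmu : IsHookShape m n R' C') (hu : IsSemistandard m n R' C' u)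
    (hB : IsTrivialExtractable m n R C (pullT m R C R' C' u) B B')
    (h : memShape m (pushedR R' (excess m R R' B)) (pushedC C' (excess n C C' B')) i j) :
    pushedT m (pullT m R C R' C' u) B B' i j ≤
      pushedT m u (excess m R R' B) (excess n C C' B') i j := by
  rcases lt_or_ge i m with hi | hi
  · have hsrc := memShape_of_memShape_pushed_of_lt hi h
    have := sub_le_excess (L := R) (L' := R') hB.bzero i
    rw [pushedT_pullT_of_lt hi, pushedT_of_lt hi]
    split_ifs
    · rcases le_or_gt (u i (j + excess m R R' B i)) m with hs | hs
      · exact hu.add_one_le_of_le hmu hsrc hs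
      · omega
    · exact hu.row_mono hmu (by omega) hsrc
  · have hsrc := memShape_of_memShape_pushed_of_le hi h
    have := sub_le_excess (L := C) (L' := C') (hB.eq_zero_cols hlam) j
    rw [pushedT_pullT_of_le hi, pushedT_of_le hi]
    split_ifs
    · exact hu.add_add_one_le hmu (by omega) hsrc
    · exact hu.col_mono hmu (by omega) hsrc

lemma le_pushedT_excess {E E' : ℕ → ℕ} (hmu : IsHookShape m n R' C')
    (hu : IsSemistandard m n R' C' u) (hE : ∀ i, m ≤ i → E i = 0)
    (h : memShape m (pushedR R' E) (pushedC C' E') i j) :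
    u i (j + E i) ≤ pushedT m u E E' i j := by
  rcases lt_or_ge i m with hi | hi
  · rw [pushedT_of_lt hi]
  · rw [pushedT_of_le hi, hE i hi, add_zero]
    exact hu.col_mono hmu (Nat.le_add_right i _) (memShape_of_memShape_pushed_of_le hi h)

lemma pushedT_pullT_eq_of_excess_lt_rows
    {E' : ℕ → ℕ} (h : excess m R R' B (i + 1) < excess m R R' B i) :
    pushedT m (pullT m R C R' C' u) B B' i j = pushedT m u (excess m R R' B) E' i j := by
  have hi : i < m := lt_of_excess_pos (Nat.zero_le _ |>.trans_lt h)
  have := eq_add_excess_of_lt h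
  rw [pushedT_pullT_of_lt hi, pushedT_of_lt hi, if_neg (by omega)]
  congr 1
  omega

lemma pushedT_pullT_eq_of_excess_lt_cols (hi : m ≤ i)
    {E : ℕ → ℕ} (h : excess n C C' B' (j + 1) < excess n C C' B' j) :
    pushedT m (pullT m R C R' C' u) B B' i j = pushedT m u E (excess n C C' B') i j := by
  have := eq_add_excess_of_lt h
  rw [pushedT_pullT_of_le hi, pushedT_of_le hi, if_neg (by omega)]
  congr 1
  omega

lemma pushedT_excess_rowLt (hlam : IsHookShape m n R C) (hmu : IsHookShape m n R' C')
    (hle : ShapeLE m R' C' R C) (hu : IsSemistandard m n R' C' u)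
    (hB : IsTrivialExtractable m n R C (pullT m R C R' C' u) B B') (hi : m ≤ i)
    (h : memShape m (pushedR R' (excess m R R' B)) (pushedC C' (excess n C C' B')) i (j + 1)) :
    pushedT m u (excess m R R' B) (excess n C C' B') i j <
      pushedT m u (excess m R R' B) (excess n C C' B') i (j + 1) := by
  have hsrc := memShape_of_memShape_pushed_of_le hi
    ((isHookShape_pushed_excess hlam hmu hle hB).memShape_of_le_col (Nat.le_add_right j 1) h)
  have hgt : m < pushedT m u (excess m R R' B) (excess n C C' B') i j := by
    rw [pushedT_of_le hi]
    exact hu.lt_of_memShape_of_le hmu (by omega) hsrc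
  rcases (excess_antitone (Nat.le_add_right j 1)).lt_or_eq with hjump | heq
  · rw [← pushedT_pullT_eq_of_excess_lt_cols hi hjump] at hgt ⊢
    exact (hB.pushSS.rowLt i j (memShape_pushed_of_memShape_pushed_excess hlam hle hB h)
      hgt).trans_le (pushedT_pullT_le_pushedT_excess hlam hmu hu hB h)
  · have hsrc' := memShape_of_memShape_pushed_of_le hi h
    rw [pushedT_of_le hi] at hgt
    rw [heq] at hsrc'
    rw [pushedT_of_le hi, pushedT_of_le hi, heq]
    exact hu.rowLt _ _ hsrc' hgt

lemma pushedT_excess_colLe (hlam : IsHookShape m n R C) (hmu : IsHookShape m n R' C')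
    (hle : ShapeLE m R' C' R C) (hu : IsSemistandard m n R' C' u)
    (hB : IsTrivialExtractable m n R C (pullT m R C R' C' u) B B') (hi : i < m)
    (h : memShape m (pushedR R' (excess m R R' B)) (pushedC C' (excess n C C' B')) (i + 1) j) :
    pushedT m u (excess m R R' B) (excess n C C' B') i j ≤
        pushedT m u (excess m R R' B) (excess n C C' B') (i + 1) j ∧
      (pushedT m u (excess m R R' B) (excess n C C' B') i j ≤ m →
        pushedT m u (excess m R R' B) (excess n C C' B') i j <
          pushedT m u (excess m R R' B) (excess n C C' B') (i + 1) j) := by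
  rcases (excess_antitone (Nat.le_add_right i 1)).lt_or_eq with hjump | heq
  · have hv := hB.pushSS
    have hmem := memShape_pushed_of_memShape_pushed_excess hlam hle hB h
    have hvw := pushedT_pullT_le_pushedT_excess hlam hmu hu hB h
    rw [← pushedT_pullT_eq_of_excess_lt_rows hjump]
    exact ⟨(hv.colLe i j hmem).trans hvw, fun hs => (hv.colLt i j hmem hs).trans_le hvw⟩
  · have hsrc := memShape_add_of_memShape_pushed (fun _ hk => excess_of_le hk) h
    have huw := le_pushedT_excess hmu hu (fun _ hk => excess_of_le hk) h
    rw [heq] at hsrc huw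
    rw [pushedT_of_lt hi]
    exact ⟨(hu.colLe i _ hsrc).trans huw, fun hs => (hu.colLt i _ hsrc hs).trans_le huw⟩

lemma isTrivialExtractable_excess (hlam : IsHookShape m n R C) (hmu : IsHookShape m n R' C')
    (hle : ShapeLE m R' C' R C) (hu : IsSemistandard m n R' C' u)
    (hB : IsTrivialExtractable m n R C (pullT m R C R' C' u) B B') :
    IsTrivialExtractable m n R' C' u (excess m R R' B) (excess n C C' B') where
  ble i _ := excess_le hB.le_rows hmu.antitone_rows i
  bzero _ hi := excess_of_le hi
  bmono _ _ h _ := excess_antitone h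
  b'le j := excess_le hB.b'le (fun _ _ h => hmu.cmono h) j
  b'mono _ _ h := excess_antitone h
  trivTop _ _ _ hj := eq_of_lt_excess_rows hmu hu hB hj
  trivBot _ _ hk := eq_of_lt_excess_cols hmu hu hB hk
  pushShape := isHookShape_pushed_excess hlam hmu hle hB
  pushSS := hu.pushed hmu (fun _ _ hi h => pushedT_excess_rowLt hlam hmu hle hu hB hi h)
    (fun _ _ hi h => (pushedT_excess_colLe hlam hmu hle hu hB hi h).1)
    (fun _ _ hi h => (pushedT_excess_colLe hlam hmu hle hu hB hi h).2)

end Maximality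

/-- If `u` is a quasistandard sl(m,n)-tableau of shape μ ≤ λ, then the trivial pair of
shape λ-μ is the largest trivial extractable pair of pull^{λ-μ}(u), and extracting it
gives back `u`: push(pull^{λ-μ}(u)) = u. -/
theorem push_pull_eq_self (m n : ℕ) (R C R' C' : ℕ → ℕ) (u : ℕ → ℕ → ℕ)
    (hlam : IsHookShape m n R C) (hmu : IsHookShape m n R' C')
    (hle : ShapeLE m R' C' R C) (hu : IsSemistandard m n R' C' u)
    (hqs : Quasistandard m n R' C' u) :
    GreatestExtractable m n R C (pullT m R C R' C' u)
      (fun i => R i - R' i) (fun j => C j - C' j) ∧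
    ∀ i j, pushedT m (pullT m R C R' C' u) (fun i => R i - R' i) (fun j => C j - C' j) i j
      = u i j := by
  refine ⟨⟨isTrivialExtractable_pullT hlam hmu hle hu, fun B B' hB => ?_⟩, pushedT_pullT_self⟩
  obtain ⟨hE, hE'⟩ := hqs _ _ (isTrivialExtractable_excess hlam hmu hle hu hB)
  refine ⟨fun i => ?_, fun j => ?_⟩
  · have := sub_le_excess (L := R) (L' := R') hB.bzero i
    have := hE i
    show B i ≤ R i - R' i
    omega
  · have := sub_le_excess (L := C) (L' := C') (hB.eq_zero_cols hlam) j
    have := hE' j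
    show B' j ≤ C j - C' j
    omega
end

section
/- Let (S⁺,S⁻) be a trivial extractable pair in a semistandard sl(m,n)-tableau T, and apply the super jeu de taquin to the skew tableau R = T∖S starting from the greatest outer corner c. If c = (i,j) with i > m, then at every step the star moves downward (never to the right) until it reaches an inner corner at the bottom of column j. -/
/-- Membership in the skew diagram T∖S, where the inner (trivial-pair) region of shape
(B,B') consists of the first B i boxes of row i < m and the first B' j below-line boxes of
column j. -/
def memSkew (m : ℕ) (R C B B' : ℕ → ℕ) (i j : ℕ) : Prop :=
  memShape m R C i j ∧ ¬ memShape m B B' i j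


lemma mem_down {m n : ℕ} {R C : ℕ → ℕ} (hs : IsHookShape m n R C) {i j : ℕ}
    (h : memShape m R C (i+1) j) : memShape m R C i j := by
  rcases h with ⟨h1, h2⟩ | ⟨h1, h2⟩
  · exact Or.inl ⟨Nat.lt_of_succ_lt h1, lt_of_lt_of_le h2 (hs.rmono (Nat.le_succ i) h1)⟩
  · by_cases hi : i < m
    · have hij := hs.hook j (by omega)
      have hieq : i = m - 1 := by omega
      subst hieq
      exact Or.inl ⟨hi, hij⟩
    · exact Or.inr ⟨by omega, by omega⟩

lemma entry_lb {m n : ℕ} {R C : ℕ → ℕ} {t : ℕ → ℕ → ℕ} (hs : IsHookShape m n R C)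
    (hss : IsSemistandard m n R C t) :
    ∀ i j, memShape m R C i j → min (i+1) (m+1) ≤ t i j := by
  intro i
  induction i with
  | zero => intro j h; have := hss.lb 0 j h; omega
  | succ i ih =>
    intro j h
    have h1 := ih j (mem_down hs h)
    by_cases hle : t i j ≤ m
    · have := hss.colLt i j h hle; omega
    · have := hss.colLe i j h; omega

lemma chain_le {m n : ℕ} {R C : ℕ → ℕ} {t : ℕ → ℕ → ℕ} (hs : IsHookShape m n R C)
    (hss : IsSemistandard m n R C t) :
    ∀ d a j, memShape m R C (a+d) j → t a j ≤ t (a+d) j := by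
  intro d
  induction d with
  | zero => intro a j _; exact le_refl _
  | succ d ih =>
    intro a j h
    have h1 := ih a j (mem_down hs h)
    exact le_trans h1 (hss.colLe (a+d) j h)

/-- Let (S⁺,S⁻) be a trivial extractable pair (B,B') in a semistandard sl(m,n)-tableau t
of shape (R,C), and let c = (m + B' j₀ - 1, j₀) be the greatest outer corner of the skew
diagram, below the line (so B' j₀ = B' 0 > 0 and B' (j₀+1) < B' j₀). Then during the super
jeu de taquin started at c, at every position (i, j₀) of the star at or below c, the rule
moves the star downward (never to the right): whenever the box below is in the skew
diagram, either the box to the right is absent from the skew diagram or the entry below is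
strictly smaller than the entry to the right. -/
theorem sjdt_from_below_line_corner_moves_down (m n : ℕ) (R C : ℕ → ℕ) (t : ℕ → ℕ → ℕ)
    (B B' : ℕ → ℕ) (j0 : ℕ)
    (hshape : IsHookShape m n R C) (hss : IsSemistandard m n R C t)
    (hex : IsTrivialExtractable m n R C t B B')
    (hB0 : 0 < B' 0) (hj0 : B' j0 = B' 0) (hj0' : B' (j0+1) < B' j0) :
    ∀ i, m + B' j0 ≤ i + 1 → memSkew m R C B B' (i+1) j0 →
      (¬ memSkew m R C B B' i (j0+1) ∨ t (i+1) j0 < t i (j0+1)) := by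
  intro i hi hmem
  by_cases hright : memSkew m R C B B' i (j0+1)
  · right
    obtain ⟨hmem1, _⟩ := hmem
    obtain ⟨hmemr, _⟩ := hright
    have hBj0 : 0 < B' j0 := hj0 ▸ hB0
    have hC0 : 0 < C 0 := lt_of_lt_of_le hB0 (hex.b'le 0)
    have hR0 : 0 < R (m-1) := by have := hshape.hook 0 hC0; omega
    have hm : 0 < m := by
      by_contra h
      have := hshape.rzero (m-1) (by omega)
      omega
    have him : m ≤ i := by omega
    set k := i - m with hk
    have hik : i = m + k := by omega
    have hkC : k < C (j0+1) := by
      rcases hmemr with ⟨h1, _⟩ | ⟨_, h2⟩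
      · omega
      · omega
    have hB'le : B' j0 ≤ k + 1 := by omega
    have hB1 : B' (j0+1) ≤ k := by omega
    -- t (i+1) j0 > m
    have hgt : m < t (i+1) j0 := by
      have := entry_lb hshape hss (i+1) j0 hmem1
      omega
    set r := m + (k + 1 - B' j0) with hr
    have hrm : ¬ r < m := by omega
    have hrmem : memShape m (pushedR R B) (pushedC C B') r (j0+1) := by
      refine Or.inr ⟨by omega, ?_⟩
      unfold pushedC
      omega
    have hrgt : m < pushedT m t B B' r j0 := by
      unfold pushedT
      rw [if_neg hrm]
      have : r + B' j0 = i + 1 := by omega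
      rw [this]
      exact hgt
    have hlt := hex.pushSS.rowLt r j0 hrmem hrgt
    unfold pushedT at hlt
    rw [if_neg hrm, if_neg hrm] at hlt
    have he1 : r + B' j0 = i + 1 := by omega
    rw [he1] at hlt
    -- now hlt : t (i+1) j0 < t (r + B' (j0+1)) (j0+1)
    set a := r + B' (j0+1) with ha
    have hale : a ≤ m + k := by omega
    have hchain : t a (j0+1) ≤ t i (j0+1) := by
      have hmem' : memShape m R C (a + (m + k - a)) (j0+1) := by
        have : a + (m + k - a) = i := by omega
        rw [this]; exact hmemr
      have := chain_le hshape hss (m + k - a) a (j0+1) hmem'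
      have heq : a + (m + k - a) = i := by omega
      rwa [heq] at this
    omega
  · exact Or.inl hright
end

section
/- In the exterior-power setting, the horizontal Plücker relation holds for two rows of odd vectors: if s_1,...,s_p and t_1,...,t_q (p ≥ q ≥ 1) are indices greater than m (so the corresponding basis vectors of ℂ^{m|n} are odd), then the antisymmetrized-in-columns tensor e_T built from the two-row tableau with rows (s_1,...,s_p) and (t_1,...,t_q) satisfies e_T = Σ_{j=1}^p e_{T·(s_j ↔ t_1)}, where T·(s_j ↔ t_1) is the tableau obtained by exchanging s_j with t_1. -/
open BigOperators

/-- The coordinate, at a pair of basis indices `x`, of the wedge e_a ∧ e_b of two odd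
basis vectors: x ↦ (1/2)(δ_{x,(a,b)} + δ_{x,(b,a)}). -/
noncomputable def wedgeCoord (M : ℕ) (a b : Fin M) (x : Fin M × Fin M) : ℂ :=
  (1/2) * ((if x.1 = a ∧ x.2 = b then 1 else 0) + (if x.1 = b ∧ x.2 = a then 1 else 0))

/-- The antisymmetrized-in-columns tensor e_T associated to the two-row tableau with rows
(s_1,…,s_p) and (t_1,…,t_q), written in coordinates on V^{⊗(p+q)} (the first q columns are
the pairs, the last p-q boxes are singletons):
e_T = Σ_{(σ,τ) ∈ S_p × S_q} ε(σ)ε(τ) (e_{s_{σ(1)}} ∧ e_{t_{τ(1)}}) ⊗ ⋯ ⊗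
(e_{s_{σ(q)}} ∧ e_{t_{τ(q)}}) ⊗ e_{s_{σ(q+1)}} ⊗ ⋯ ⊗ e_{s_{σ(p)}}. -/
noncomputable def eTrow (M p q : ℕ) (hpq : q ≤ p) (s : Fin p → Fin M) (t : Fin q → Fin M) :
    ((Fin q → Fin M × Fin M) × (Fin (p - q) → Fin M)) → ℂ :=
  fun c =>
    ∑ σ : Equiv.Perm (Fin p), ∑ τ : Equiv.Perm (Fin q),
      ((Equiv.Perm.sign σ : ℤ) : ℂ) * ((Equiv.Perm.sign τ : ℤ) : ℂ) *
        (∏ k : Fin q, wedgeCoord M (s (σ (Fin.castLE hpq k))) (t (τ k)) (c.1 k)) *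
        (∏ k : Fin (p - q),
          (if c.2 k = s (σ ⟨q + k.1, by have hk := k.isLt; omega⟩) then 1 else 0))

/-!
Fix the column permutation τ and let k₀ be the box of the first row lying in the column of t₁.
Writing j = σ l, the right-hand side becomes a sum over l and σ of sgn σ times the term of s ∘ σ
with its l-th entry exchanged with t₁. For l = k₀ the exchange happens inside one column, where
the wedge of two odd vectors is symmetric, so this gives back e_T. For l ≠ k₀ the summand is
invariant under σ ↦ σ · (l k₀), again by the column symmetry, while the sign flips, so the sum
over σ vanishes.
-/

open Equiv Function Finset

theorem Equiv.Perm.sum_sign_mul_eq_zero_of_mul_swap {α R : Type*} [DecidableEq α] [Fintype α]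
    [Ring R] {f : Perm α → R} {i j : α} (hij : i ≠ j) (hf : ∀ σ, f (σ * swap i j) = f σ) :
    ∑ σ, ((Perm.sign σ : ℤ) : R) * f σ = 0 := by
  refine sum_ninvolution (fun σ ↦ σ * swap i j) (fun σ ↦ ?_) (fun σ _ ↦ ?_)
    (fun _ ↦ mem_univ _) (fun σ ↦ by simp [mul_assoc])
  · rw [hf, Perm.sign_mul, Perm.sign_swap hij]
    push_cast
    rw [mul_neg_one, neg_mul, add_neg_cancel]
  · simpa [mul_eq_left] using hij

lemma wedgeCoord_comm (M : ℕ) (a b : Fin M) : wedgeCoord M a b = wedgeCoord M b a := by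
  funext x; unfold wedgeCoord; ring

section ColumnTensor

variable {M p q : ℕ} (hpq : q ≤ p)

/-- The coordinate at `c` of
`(e_{a₁} ∧ e_{b₁}) ⊗ ⋯ ⊗ (e_{a_q} ∧ e_{b_q}) ⊗ e_{a_{q+1}} ⊗ ⋯ ⊗ e_{a_p}`. -/
noncomputable def columnTensor (a : Fin p → Fin M) (b : Fin q → Fin M)
    (c : (Fin q → Fin M × Fin M) × (Fin (p - q) → Fin M)) : ℂ :=
  (∏ k : Fin q, wedgeCoord M (a (Fin.castLE hpq k)) (b k) (c.1 k)) *
    (∏ k : Fin (p - q), (if c.2 k = a ⟨q + k.1, by have hk := k.isLt; omega⟩ then 1 else 0))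

lemma eTrow_apply_eq_sum_columnTensor (s : Fin p → Fin M) (t : Fin q → Fin M)
    (c : (Fin q → Fin M × Fin M) × (Fin (p - q) → Fin M)) :
    eTrow M p q hpq s t c = ∑ τ : Perm (Fin q), ((Perm.sign τ : ℤ) : ℂ) *
      ∑ σ : Perm (Fin p), ((Perm.sign σ : ℤ) : ℂ) * columnTensor hpq (s ∘ σ) (t ∘ τ) c := by
  simp only [eTrow, columnTensor, comp_apply, mul_sum]
  rw [sum_comm]
  simp only [mul_assoc, mul_left_comm]

lemma columnTensor_exchange (a : Fin p → Fin M) (b : Fin q → Fin M) (i : Fin q) :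
    columnTensor hpq (update a (Fin.castLE hpq i) (b i)) (update b i (a (Fin.castLE hpq i))) =
      columnTensor hpq a b := by
  funext c
  unfold columnTensor
  congr 1
  · refine prod_congr rfl fun k _ ↦ ?_
    by_cases hk : k = i
    · subst hk
      simp only [update_self, wedgeCoord_comm]
    · have hk' : Fin.castLE hpq k ≠ Fin.castLE hpq i := (Fin.castLE_injective hpq).ne hk
      simp only [update_of_ne hk, update_of_ne hk']
  · refine prod_congr rfl fun k _ ↦ ?_
    have hk : (⟨q + k.1, by omega⟩ : Fin p) ≠ Fin.castLE hpq i := by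
      simp only [ne_eq, Fin.ext_iff, Fin.val_castLE]
      omega
    rw [update_of_ne hk]

lemma columnTensor_exchange_comp_swap (a : Fin p → Fin M) (b : Fin q → Fin M) {i : Fin q}
    {l : Fin p} (hl : l ≠ Fin.castLE hpq i) :
    columnTensor hpq (update (a ∘ swap l (Fin.castLE hpq i)) l (b i))
        (update b i ((a ∘ swap l (Fin.castLE hpq i)) l)) =
      columnTensor hpq (update a l (b i)) (update b i (a l)) := by
  rw [← columnTensor_exchange hpq (update a l (b i)) _ i]
  congr 1
  · funext x
    simp only [update_apply, comp_apply, swap_apply_def]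
    split_ifs <;> simp_all
  · simp [hl.symm]

lemma sum_sign_mul_columnTensor_eq_sum_exchange (s : Fin p → Fin M) (b : Fin q → Fin M)
    (i : Fin q) (c : (Fin q → Fin M × Fin M) × (Fin (p - q) → Fin M)) :
    ∑ σ : Perm (Fin p), ((Perm.sign σ : ℤ) : ℂ) * columnTensor hpq (s ∘ σ) b c =
      ∑ j : Fin p, ∑ σ : Perm (Fin p),
        ((Perm.sign σ : ℤ) : ℂ) * columnTensor hpq (update s j (b i) ∘ σ) (update b i (s j)) c := by
  have hreindex : ∀ σ : Perm (Fin p), ∑ j : Fin p,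
      columnTensor hpq (update s j (b i) ∘ σ) (update b i (s j)) c =
        ∑ l : Fin p, columnTensor hpq (update (s ∘ σ) l (b i)) (update b i ((s ∘ σ) l)) c := by
    intro σ
    rw [← Equiv.sum_comp σ]
    simp only [update_comp_equiv, symm_apply_apply, comp_apply]
  have hcancel : ∀ l ≠ Fin.castLE hpq i, ∑ σ : Perm (Fin p), ((Perm.sign σ : ℤ) : ℂ) *
      columnTensor hpq (update (s ∘ σ) l (b i)) (update b i ((s ∘ σ) l)) c = 0 := fun l hl ↦
    Perm.sum_sign_mul_eq_zero_of_mul_swap hl fun σ ↦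
      congrFun (columnTensor_exchange_comp_swap hpq (s ∘ σ) b hl) c
  calc ∑ σ : Perm (Fin p), ((Perm.sign σ : ℤ) : ℂ) * columnTensor hpq (s ∘ σ) b c
      = ∑ l : Fin p, ∑ σ : Perm (Fin p), ((Perm.sign σ : ℤ) : ℂ) *
          columnTensor hpq (update (s ∘ σ) l (b i)) (update b i ((s ∘ σ) l)) c := by
        rw [Fintype.sum_eq_single _ hcancel]
        simp only [columnTensor_exchange]
    _ = _ := by
        simp only [sum_comm (γ := Fin p), ← mul_sum, hreindex]

end ColumnTensor

theorem horizontal_plucker_general (M p q : ℕ) (hq : 0 < q) (hpq : q ≤ p)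
    (s : Fin p → Fin M) (t : Fin q → Fin M) :
    eTrow M p q hpq s t =
      ∑ j : Fin p,
        eTrow M p q hpq (Function.update s j (t ⟨0, hq⟩))
          (Function.update t ⟨0, hq⟩ (s j)) := by
  funext c
  have hrow : ∀ τ : Perm (Fin q),
      ∑ σ : Perm (Fin p), ((Perm.sign σ : ℤ) : ℂ) * columnTensor hpq (s ∘ σ) (t ∘ τ) c =
        ∑ j : Fin p, ∑ σ : Perm (Fin p), ((Perm.sign σ : ℤ) : ℂ) *
          columnTensor hpq (update s j (t ⟨0, hq⟩) ∘ σ) (update t ⟨0, hq⟩ (s j) ∘ τ) c := by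
    intro τ
    simpa [update_comp_equiv] using
      sum_sign_mul_columnTensor_eq_sum_exchange hpq s (t ∘ τ) (τ.symm ⟨0, hq⟩) c
  simp only [Finset.sum_apply, eTrow_apply_eq_sum_columnTensor, hrow, mul_sum]
  exact sum_comm

/-- The horizontal Plücker relation for two rows of odd vectors: if all the indices
s_1,…,s_p and t_1,…,t_q (p ≥ q ≥ 1) correspond to odd basis vectors of ℂ^{m|n} (indices
greater than m), then e_T = Σ_{j=1}^p e_{T·(s_j ↔ t_1)}, where T·(s_j ↔ t_1) is the
tableau obtained by exchanging s_j with t_1. -/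
theorem horizontal_plucker (m M p q : ℕ) (hq : 0 < q) (hpq : q ≤ p)
    (s : Fin p → Fin M) (t : Fin q → Fin M)
    (hs : ∀ k, m ≤ (s k).val) (ht : ∀ k, m ≤ (t k).val) :
    eTrow M p q hpq s t =
      ∑ j : Fin p,
        eTrow M p q hpq (Function.update s j (t ⟨0, hq⟩))
          (Function.update t ⟨0, hq⟩ (s j)) :=
  horizontal_plucker_general M p q hq hpq s t
end
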